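/- Let (X,‖·‖) be a real Banach space and let S, with domain D(S) ⊆ X, generate a bounded analytic semigroup (T(t))_{t≥0} with constants M, C₀ as in the context, and let s ∈ (0,2) and T₀ ∈ (0,∞]. Then there exists a constant C = C(s,M,C₀) such that for every strongly measurable f : (0,T₀) → X with f(τ) in the range of S for a.e. τ and ∫₀^{T₀} ‖f(τ)‖_{Ḃ⁻ˢ} dτ < ∞, one has (a) ∫₀^{T₀} ∫₀^{t} ‖S(T(t−τ)f(τ))‖_{Ḃ⁻ˢ} dτ dt ≤ C ∫₀^{T₀} ‖f(τ)‖_{Ḃ⁻ˢ} dτ (here T(t−τ)f(τ) ∈ D(S) for t > τ by analyticity), and (b) for every t ∈ (0,T₀): ∫₀^{t} ‖T(t−τ)f(τ)‖_{Ḃ⁻ˢ} dτ ≤ C ∫₀^{T₀} ‖f(τ)‖_{Ḃ⁻ˢ} dτ. -/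

import Mathlib

/-!
Since `T(σ)` commutes with every `T(r)` and has norm at most `M`,
`‖T(σ)x‖_{Ḃ⁻ˢ} ≤ M ‖x‖_{Ḃ⁻ˢ}`, which gives (b).

For (a), analyticity gives `‖S T(u) x‖ ≤ (2C₀/u) ‖T(u/2) x‖`, hence
`‖S T(σ) x‖_{Ḃ⁻ˢ} ≤ ∫₀^∞ r^{s/2-1} (2C₀/(σ+r)) ‖T((σ+r)/2) x‖ dr`.
Integrating in `σ` and substituting `u = σ + r`, the inner integral
`∫₀^u r^{s/2-1} dr = u^{s/2}/(s/2)` absorbs the factor `1/u`, and rescaling `u ↦ u/2` gives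
`∫₀^∞ ‖S T(σ) x‖_{Ḃ⁻ˢ} dσ ≤ 2^{s/2} (4C₀/s) ‖x‖_{Ḃ⁻ˢ}`. By Tonelli and the substitution
`t = σ + τ`, the left side of (a) is at most the integral of this bound over `τ`.
-/

open MeasureTheory
open scoped ENNReal NNReal

noncomputable section

variable {X : Type*} [NormedAddCommGroup X] [NormedSpace ℝ X] [CompleteSpace X]

/-- `S`, a linear operator defined on the subspace `D ⊆ X`, generates the bounded
analytic semigroup `(T(t))_{t≥0}` with constants `M, C₀`. -/
structure IsBAS (D : Set X) (S : X → X) (T : ℝ → X →L[ℝ] X) (M C₀ : ℝ) : Prop where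
  zero_mem : (0 : X) ∈ D
  add_mem : ∀ x ∈ D, ∀ y ∈ D, x + y ∈ D
  smul_mem : ∀ (c : ℝ), ∀ x ∈ D, c • x ∈ D
  map_add : ∀ x ∈ D, ∀ y ∈ D, S (x + y) = S x + S y
  map_smul : ∀ (c : ℝ), ∀ x ∈ D, S (c • x) = c • S x
  T_zero : T 0 = ContinuousLinearMap.id ℝ X
  T_semigroup : ∀ t : ℝ, 0 ≤ t → ∀ s : ℝ, 0 ≤ s → T (t + s) = (T t).comp (T s)
  T_cont : ∀ x : X, ContinuousOn (fun t : ℝ => T t x) (Set.Ici 0)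
  T_bdd : ∀ t : ℝ, 0 ≤ t → ∀ x : X, ‖T t x‖ ≤ M * ‖x‖
  T_mem : ∀ x ∈ D, ∀ t : ℝ, 0 ≤ t → T t x ∈ D
  T_comm : ∀ x ∈ D, ∀ t : ℝ, 0 ≤ t → S (T t x) = T t (S x)
  T_deriv : ∀ x ∈ D, ∀ t : ℝ, 0 ≤ t →
    HasDerivWithinAt (fun τ : ℝ => T τ x) (T t (S x)) (Set.Ici 0) t
  analytic_mem : ∀ x : X, ∀ t : ℝ, 0 < t → T t x ∈ D
  analytic_bdd : ∀ x : X, ∀ t : ℝ, 0 < t → t * ‖S (T t x)‖ ≤ C₀ * ‖x‖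

/-- The (extended-real-valued) seminorm `‖x‖_{Ḃˢ} = ∫₀^∞ t^{−s/2}‖S(T(t)x)‖ dt`. -/
def BsNorm (S : X → X) (T : ℝ → X →L[ℝ] X) (s : ℝ) (x : X) : ℝ≥0∞ :=
  ∫⁻ t in Set.Ioi (0 : ℝ), ENNReal.ofReal (t ^ (-s / 2) * ‖S (T t x)‖)

/-- The (extended-real-valued) seminorm `‖x‖_{Ḃ⁻ˢ} = ∫₀^∞ t^{s/2−1}‖T(t)x‖ dt`. -/
def BnegNorm (T : ℝ → X →L[ℝ] X) (s : ℝ) (x : X) : ℝ≥0∞ :=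
  ∫⁻ t in Set.Ioi (0 : ℝ), ENNReal.ofReal (t ^ (s / 2 - 1) * ‖T t x‖)

open Set Function Filter Topology

theorem continuousOn_apply_of_norm_apply_le {α 𝕜 E F : Type*} [TopologicalSpace α]
    [NontriviallyNormedField 𝕜] [NormedAddCommGroup E] [NormedSpace 𝕜 E]
    [NormedAddCommGroup F] [NormedSpace 𝕜 F] {T : α → E →L[𝕜] F} {K : Set α} {M : ℝ}
    (hcont : ∀ x, ContinuousOn (T · x) K) (hbdd : ∀ t ∈ K, ∀ x, ‖T t x‖ ≤ M * ‖x‖) :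
    ContinuousOn (fun q : α × E => T q.1 q.2) (K ×ˢ univ) := by
  rintro ⟨a, x⟩ ⟨ha, -⟩
  have hfst : ContinuousWithinAt (fun q : α × E => T q.1 x) (K ×ˢ univ) (a, x) :=
    ((hcont x).comp continuousOn_fst fun _ hq => hq.1) (a, x) ⟨ha, trivial⟩
  have hsnd : Tendsto (fun q : α × E => T q.1 (q.2 - x)) (𝓝[K ×ˢ univ] (a, x)) (𝓝 0) := by
    refine squeeze_zero_norm' (eventually_nhdsWithin_of_forall fun q hq => hbdd q.1 hq.1 _) ?_
    simpa using ((continuous_snd.sub continuous_const).norm.const_mul M).tendsto' (a, x) 0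
      (by simp) |>.mono_left nhdsWithin_le_nhds
  simpa [ContinuousWithinAt] using hfst.tendsto.add hsnd

theorem setLIntegral_Ioi_comp_sub (f : ℝ → ℝ≥0∞) (a : ℝ) :
    ∫⁻ t in Ioi a, f (t - a) = ∫⁻ σ in Ioi 0, f σ := by
  have hpre : (· - a) ⁻¹' Ioi (0 : ℝ) = Ioi a := by ext; simp
  rw [← hpre]
  exact (measurePreserving_sub_right volume a).setLIntegral_comp_preimage_emb
    (measurableEmbedding_subRight a) f _

theorem setLIntegral_Ioi_comp_div (f : ℝ → ℝ≥0∞) {c : ℝ} (hc : 0 < c) :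
    ∫⁻ u in Ioi 0, f (u / c) = ENNReal.ofReal c * ∫⁻ v in Ioi 0, f v := by
  simp_rw [div_eq_mul_inv]
  have hemb : MeasurableEmbedding (· * c⁻¹) :=
    (Homeomorph.mulRight₀ c⁻¹ (inv_ne_zero hc.ne')).measurableEmbedding
  have hpre : (· * c⁻¹) ⁻¹' Ioi (0 : ℝ) = Ioi 0 := by ext; simp [hc]
  have hmap : Measure.map (· * c⁻¹) (volume.restrict (Ioi 0)) =
      ENNReal.ofReal c • volume.restrict (Ioi (0 : ℝ)) := by
    conv_lhs => rw [← hpre]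
    rw [← hemb.restrict_map, Real.map_volume_mul_right (inv_ne_zero hc.ne'),
      Measure.restrict_smul, inv_inv, abs_of_pos hc]
  rw [← hemb.lintegral_map, hmap, lintegral_smul_measure, smul_eq_mul]

theorem lintegral_Ioi_lintegral_Ioo_sub {F : ℝ → ℝ → ℝ≥0∞} (hF : Measurable (uncurry F)) :
    ∫⁻ t in Ioi 0, ∫⁻ τ in Ioo 0 t, F (t - τ) τ = ∫⁻ τ in Ioi 0, ∫⁻ σ in Ioi 0, F σ τ := by
  set G : ℝ → ℝ → ℝ≥0∞ := fun t τ => (Iio t).indicator (fun τ => F (t - τ) τ) τ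
  have hG : Measurable (uncurry G) :=
    (hF.comp ((measurable_fst.sub measurable_snd).prodMk measurable_snd)).indicator
      (measurableSet_lt measurable_snd measurable_fst)
  calc ∫⁻ t in Ioi 0, ∫⁻ τ in Ioo 0 t, F (t - τ) τ
      = ∫⁻ t in Ioi 0, ∫⁻ τ in Ioi 0, G t τ := by
        refine lintegral_congr fun t => ?_
        rw [setLIntegral_indicator measurableSet_Iio, inter_comm, Ioi_inter_Iio]
    _ = ∫⁻ τ in Ioi 0, ∫⁻ t in Ioi 0, G t τ := lintegral_lintegral_swap hG.aemeasurable
    _ = ∫⁻ τ in Ioi 0, ∫⁻ σ in Ioi 0, F σ τ := by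
        refine setLIntegral_congr_fun measurableSet_Ioi fun τ (hτ : 0 < τ) => ?_
        have hGτ : ∀ t, G t τ = (Ioi τ).indicator (fun t => F (t - τ) τ) t := fun t => by
          simp [G, indicator]
        rw [lintegral_congr hGτ, setLIntegral_indicator measurableSet_Ioi,
          inter_eq_left.2 (Ioi_subset_Ioi hτ.le), ← setLIntegral_Ioi_comp_sub _ τ]

theorem setLIntegral_lintegral_Ioo_sub_le {A : Set ℝ} (hA : MeasurableSet A) (hA0 : A ⊆ Ioi 0)
    (hA_Ioo : ∀ t ∈ A, Ioo 0 t ⊆ A) {F : ℝ → ℝ → ℝ≥0∞} (hF : Measurable (uncurry F)) :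
    ∫⁻ t in A, ∫⁻ τ in Ioo 0 t, F (t - τ) τ ≤ ∫⁻ τ in A, ∫⁻ σ in Ioi 0, F σ τ := by
  set FA : ℝ → ℝ → ℝ≥0∞ := fun σ τ => A.indicator (F σ) τ
  have hFA : Measurable (uncurry FA) := hF.indicator (measurable_snd hA)
  calc ∫⁻ t in A, ∫⁻ τ in Ioo 0 t, F (t - τ) τ
      = ∫⁻ t in A, ∫⁻ τ in Ioo 0 t, FA (t - τ) τ :=
        setLIntegral_congr_fun hA fun t ht => setLIntegral_congr_fun measurableSet_Ioo
          fun τ hτ => (indicator_of_mem (hA_Ioo t ht hτ) _).symm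
    _ ≤ ∫⁻ t in Ioi 0, ∫⁻ τ in Ioo 0 t, FA (t - τ) τ := lintegral_mono_set hA0
    _ = ∫⁻ τ in Ioi 0, A.indicator (fun τ => ∫⁻ σ in Ioi 0, F σ τ) τ := by
        rw [lintegral_Ioi_lintegral_Ioo_sub hFA]
        refine lintegral_congr fun τ => ?_
        by_cases hτ : τ ∈ A <;> simp [FA, hτ]
    _ = ∫⁻ τ in A, ∫⁻ σ in Ioi 0, F σ τ := by
        rw [setLIntegral_indicator hA, inter_eq_left.2 hA0]

theorem lintegral_Ioo_rpow {p : ℝ} (hp : -1 < p) {u : ℝ} (hu : 0 ≤ u) :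
    ∫⁻ r in Ioo 0 u, ENNReal.ofReal (r ^ p) = ENNReal.ofReal (u ^ (p + 1) / (p + 1)) := by
  have hint : IntegrableOn (· ^ p) (Ioc 0 u) := by
    simpa [intervalIntegrable_iff_integrableOn_Ioc_of_le hu] using
      intervalIntegral.intervalIntegrable_rpow' (a := 0) (b := u) hp
  rw [restrict_Ioo_eq_restrict_Ioc, ← ofReal_integral_eq_lintegral_ofReal hint
    ((ae_restrict_iff' measurableSet_Ioc).2 (ae_of_all _ fun r hr => Real.rpow_nonneg hr.1.le p)),
    ← intervalIntegral.integral_of_le hu, integral_rpow (Or.inl hp),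
    Real.zero_rpow (by linarith), sub_zero]

theorem lintegral_Ioi_lintegral_Ioi_rpow_mul_comp_add {p : ℝ} (hp : -1 < p) {φ : ℝ → ℝ≥0∞}
    (hφ : Measurable φ) :
    ∫⁻ σ in Ioi 0, ∫⁻ r in Ioi 0, ENNReal.ofReal (r ^ p) * φ (σ + r)
      = ∫⁻ u in Ioi 0, ENNReal.ofReal (u ^ (p + 1) / (p + 1)) * φ u := by
  have hF : Measurable (uncurry fun σ r => ENNReal.ofReal (r ^ p) * φ (σ + r)) := by
    fun_prop
  rw [lintegral_lintegral_swap hF.aemeasurable, ← lintegral_Ioi_lintegral_Ioo_sub hF]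
  refine setLIntegral_congr_fun measurableSet_Ioi fun u hu => ?_
  simp only [sub_add_cancel]
  rw [lintegral_mul_const _ (by fun_prop), lintegral_Ioo_rpow hp (le_of_lt hu)]

variable {E : Type*} [NormedAddCommGroup E] [NormedSpace ℝ E]

def smoothingBound (T : ℝ → E →L[ℝ] E) (C₀ : ℝ) (x : E) (u : ℝ) : ℝ≥0∞ :=
  ENNReal.ofReal (2 * C₀ / u * ‖T (max (u / 2) 0) x‖)

theorem lintegral_rpow_div_mul_smoothingBound {s : ℝ} (hs : 0 < s) (T : ℝ → E →L[ℝ] E)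
    (C₀ : ℝ) (x : E) :
    ∫⁻ u in Ioi 0, ENNReal.ofReal (u ^ (s / 2) / (s / 2)) * smoothingBound T C₀ x u
      = ENNReal.ofReal (2 ^ (s / 2) * (4 * C₀ / s)) * BnegNorm T s x := by
  set K := 2 ^ (s / 2) * (4 * C₀ / s) with hK
  have hpoint : ∀ u > 0, ENNReal.ofReal (u ^ (s / 2) / (s / 2)) * smoothingBound T C₀ x u
      = ENNReal.ofReal (K / 2 * ((u / 2) ^ (s / 2 - 1) * ‖T (u / 2) x‖)) := fun u hu => by
    rw [smoothingBound, max_eq_left (by positivity), ← ENNReal.ofReal_mul (by positivity)]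
    congr 1
    have hu_pow : u ^ (s / 2) = u ^ (s / 2 - 1) * u := by
      rw [← Real.rpow_add_one hu.ne', sub_add_cancel]
    have h2_pow : (2 : ℝ) ^ (s / 2) = 2 ^ (s / 2 - 1) * 2 := by
      rw [← Real.rpow_add_one two_ne_zero, sub_add_cancel]
    rw [Real.div_rpow hu.le zero_le_two, hK, hu_pow, h2_pow]
    field_simp
    ring
  rw [setLIntegral_congr_fun measurableSet_Ioi hpoint,
    setLIntegral_Ioi_comp_div (fun v => ENNReal.ofReal (K / 2 * (v ^ (s / 2 - 1) * ‖T v x‖)))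
      two_pos, BnegNorm, ← lintegral_const_mul' _ _ ENNReal.ofReal_ne_top,
    ← lintegral_const_mul' _ _ ENNReal.ofReal_ne_top]
  refine setLIntegral_congr_fun measurableSet_Ioi fun v (hv : 0 < v) => ?_
  rw [← ENNReal.ofReal_mul zero_le_two, ← ENNReal.ofReal_mul' (by positivity)]
  ring_nf

variable {D : Set E} {S : E → E} {T : ℝ → E →L[ℝ] E} {M C₀ : ℝ}

namespace IsBAS

theorem apply_apply (hT : IsBAS D S T M C₀) {a b : ℝ} (ha : 0 ≤ a) (hb : 0 ≤ b) (x : E) :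
    T a (T b x) = T (a + b) x := by
  rw [hT.T_semigroup a ha b hb, ContinuousLinearMap.comp_apply]

theorem continuous_apply_max_zero (hT : IsBAS D S T M C₀) :
    Continuous fun q : ℝ × E => T (max q.1 0) q.2 :=
  (continuousOn_apply_of_norm_apply_le hT.T_cont hT.T_bdd).comp_continuous
    ((continuous_fst.max continuous_const).prodMk continuous_snd)
    fun q : ℝ × E => ⟨le_max_right q.1 0, trivial⟩

theorem norm_S_apply_le (hT : IsBAS D S T M C₀) {u : ℝ} (hu : 0 < u) (x : E) :
    ‖S (T u x)‖ ≤ 2 * C₀ / u * ‖T (u / 2) x‖ := by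
  have hu2 : 0 < u / 2 := half_pos hu
  have h := hT.analytic_bdd (T (u / 2) x) (u / 2) hu2
  rw [hT.apply_apply hu2.le hu2.le, add_halves] at h
  rw [div_mul_eq_mul_div, le_div_iff₀ hu]
  linarith

theorem bnegNorm_apply_le (hT : IsBAS D S T M C₀) (s : ℝ) {σ : ℝ} (hσ : 0 ≤ σ) (x : E) :
    BnegNorm T s (T σ x) ≤ ENNReal.ofReal M * BnegNorm T s x := by
  rw [BnegNorm, BnegNorm, ← lintegral_const_mul' _ _ ENNReal.ofReal_ne_top]
  refine setLIntegral_mono' measurableSet_Ioi fun r (hr : 0 < r) => ?_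
  rw [← ENNReal.ofReal_mul' (by positivity)]
  refine ENNReal.ofReal_le_ofReal ?_
  rw [hT.apply_apply hr.le hσ, add_comm, ← hT.apply_apply hσ hr.le, mul_left_comm]
  exact mul_le_mul_of_nonneg_left (hT.T_bdd σ hσ _) (Real.rpow_nonneg hr.le _)

theorem bnegNorm_S_apply_le (hT : IsBAS D S T M C₀) (s : ℝ) {σ : ℝ} (hσ : 0 < σ) (x : E) :
    BnegNorm T s (S (T σ x))
      ≤ ∫⁻ r in Ioi 0, ENNReal.ofReal (r ^ (s / 2 - 1)) * smoothingBound T C₀ x (σ + r) := by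
  rw [BnegNorm]
  refine setLIntegral_mono' measurableSet_Ioi fun r (hr : 0 < r) => ?_
  have hσr : 0 < σ + r := by positivity
  rw [smoothingBound, ← ENNReal.ofReal_mul (by positivity), max_eq_left (by positivity),
    ← hT.T_comm _ (hT.analytic_mem x σ hσ) r hr.le, hT.apply_apply hr.le hσ.le, add_comm]
  exact ENNReal.ofReal_le_ofReal
    (mul_le_mul_of_nonneg_left (hT.norm_S_apply_le hσr x) (by positivity))

theorem measurable_smoothingBound (hT : IsBAS D S T M C₀) {g : ℝ → E}
    (hg : StronglyMeasurable g) : Measurable (uncurry fun u τ => smoothingBound T C₀ (g τ) u) := by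
  have hT_g : StronglyMeasurable fun q : ℝ × ℝ => T (max (q.1 / 2) 0) (g q.2) :=
    hT.continuous_apply_max_zero.comp_stronglyMeasurable
      ((measurable_fst.div_const 2).stronglyMeasurable.prodMk (hg.comp_measurable measurable_snd))
  exact ENNReal.measurable_ofReal.comp
    ((measurable_const.div measurable_fst).mul hT_g.norm.measurable)

theorem setLIntegral_lintegral_bnegNorm_S_le (hT : IsBAS D S T M C₀) {s : ℝ} (hs : 0 < s)
    {A : Set ℝ} (hA : MeasurableSet A) (hA0 : A ⊆ Ioi 0) (hA_Ioo : ∀ t ∈ A, Ioo 0 t ⊆ A)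
    {f : ℝ → E} (hf : AEStronglyMeasurable f (volume.restrict A)) :
    ∫⁻ t in A, ∫⁻ τ in Ioo 0 t, BnegNorm T s (S (T (t - τ) (f τ)))
      ≤ ENNReal.ofReal (2 ^ (s / 2) * (4 * C₀ / s)) * ∫⁻ τ in A, BnegNorm T s (f τ) := by
  set g := hf.mk f
  have hfg : ∀ᵐ τ, τ ∈ A → f τ = g τ := (ae_restrict_iff' hA).1 hf.ae_eq_mk
  have hB := hT.measurable_smoothingBound (C₀ := C₀) hf.stronglyMeasurable_mk
  set F : ℝ → ℝ → ℝ≥0∞ := fun σ τ =>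
    ∫⁻ r in Ioi 0, ENNReal.ofReal (r ^ (s / 2 - 1)) * smoothingBound T C₀ (g τ) (σ + r)
  have hF : Measurable (uncurry F) := Measurable.lintegral_prod_right' <|
    (by fun_prop : Measurable fun q : (ℝ × ℝ) × ℝ => ENNReal.ofReal (q.2 ^ (s / 2 - 1))).mul
      (hB.comp ((measurable_fst.fst.add measurable_snd).prodMk measurable_fst.snd))
  calc ∫⁻ t in A, ∫⁻ τ in Ioo 0 t, BnegNorm T s (S (T (t - τ) (f τ)))
      ≤ ∫⁻ t in A, ∫⁻ τ in Ioo 0 t, F (t - τ) τ := by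
        refine setLIntegral_mono' hA fun t ht => setLIntegral_mono_ae' measurableSet_Ioo ?_
        filter_upwards [hfg] with τ hτg hτ
        rw [hτg (hA_Ioo t ht hτ)]
        exact hT.bnegNorm_S_apply_le s (sub_pos.2 hτ.2) _
    _ ≤ ∫⁻ τ in A, ∫⁻ σ in Ioi 0, F σ τ := setLIntegral_lintegral_Ioo_sub_le hA hA0 hA_Ioo hF
    _ = ∫⁻ τ in A, ENNReal.ofReal (2 ^ (s / 2) * (4 * C₀ / s)) * BnegNorm T s (g τ) := by
        refine lintegral_congr fun τ => ?_
        simp only [F]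
        rw [lintegral_Ioi_lintegral_Ioi_rpow_mul_comp_add (φ := smoothingBound T C₀ (g τ))
          (by linarith)
          (hB.comp (measurable_id.prodMk measurable_const)), sub_add_cancel,
          lintegral_rpow_div_mul_smoothingBound hs]
    _ = ENNReal.ofReal (2 ^ (s / 2) * (4 * C₀ / s)) * ∫⁻ τ in A, BnegNorm T s (f τ) := by
        rw [lintegral_const_mul' _ _ ENNReal.ofReal_ne_top]
        exact congrArg _ (setLIntegral_congr_fun_ae hA (hfg.mono fun τ h hτ => by rw [h hτ]))

end IsBAS

theorem maximal_L1_regularity_Bneg_general (s : ℝ) (hs0 : 0 < s) (M C₀ : ℝ) :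
    ∃ C : ℝ≥0, ∀ T₀ : ℝ≥0∞, 0 < T₀ →
      ∀ (D : Set X) (S : X → X) (T : ℝ → X →L[ℝ] X), IsBAS D S T M C₀ →
      ∀ f : ℝ → X,
        AEStronglyMeasurable f
          (volume.restrict {τ : ℝ | 0 < τ ∧ ENNReal.ofReal τ < T₀}) →
        (∀ᵐ τ ∂volume.restrict {τ : ℝ | 0 < τ ∧ ENNReal.ofReal τ < T₀},
          f τ ∈ S '' D) →
        (∫⁻ τ in {τ : ℝ | 0 < τ ∧ ENNReal.ofReal τ < T₀}, BnegNorm T s (f τ)) ≠ ⊤ →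
        (∫⁻ t in {τ : ℝ | 0 < τ ∧ ENNReal.ofReal τ < T₀},
            ∫⁻ τ in Set.Ioo 0 t, BnegNorm T s (S (T (t - τ) (f τ))))
          ≤ C * ∫⁻ τ in {τ : ℝ | 0 < τ ∧ ENNReal.ofReal τ < T₀},
              BnegNorm T s (f τ) ∧
        ∀ t : ℝ, 0 < t → ENNReal.ofReal t < T₀ →
          (∫⁻ τ in Set.Ioo 0 t, BnegNorm T s (T (t - τ) (f τ)))
            ≤ C * ∫⁻ τ in {τ : ℝ | 0 < τ ∧ ENNReal.ofReal τ < T₀},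
                BnegNorm T s (f τ) := by
  refine ⟨M.toNNReal + (2 ^ (s / 2) * (4 * C₀ / s)).toNNReal,
    fun T₀ _ D S T hT f hf _ _ => ?_⟩
  set A := {τ : ℝ | 0 < τ ∧ ENNReal.ofReal τ < T₀}
  have hA : MeasurableSet A :=
    measurableSet_Ioi.inter (measurableSet_lt ENNReal.measurable_ofReal measurable_const)
  have hA_Ioo : ∀ t ∈ A, Ioo 0 t ⊆ A := fun t ht τ hτ =>
    ⟨hτ.1, (ENNReal.ofReal_le_ofReal hτ.2.le).trans_lt ht.2⟩
  constructor
  · refine (hT.setLIntegral_lintegral_bnegNorm_S_le hs0 hA (fun τ hτ => hτ.1) hA_Ioo hf).trans ?_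
    gcongr
    exact ENNReal.coe_le_coe.2 le_add_self
  · intro t ht htT
    calc ∫⁻ τ in Ioo 0 t, BnegNorm T s (T (t - τ) (f τ))
        ≤ ∫⁻ τ in Ioo 0 t, ENNReal.ofReal M * BnegNorm T s (f τ) :=
          setLIntegral_mono' measurableSet_Ioo fun τ hτ =>
            hT.bnegNorm_apply_le s (sub_nonneg.2 hτ.2.le) _
      _ ≤ ENNReal.ofReal M * ∫⁻ τ in A, BnegNorm T s (f τ) := by
          rw [lintegral_const_mul' _ _ ENNReal.ofReal_ne_top]
          exact mul_le_mul_right (lintegral_mono_set (hA_Ioo t ⟨ht, htT⟩)) _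
      _ ≤ _ := by
          gcongr
          exact ENNReal.coe_le_coe.2 le_self_add

/-- Maximal `L¹` regularity bound in `Ḃ⁻ˢ` for the Duhamel (inhomogeneous) part:
for `s ∈ (0,2)` and `T₀ ∈ (0,∞]` there is `C = C(s,M,C₀)` such that for every
strongly measurable `f : (0,T₀) → X` taking values in the range of `S` a.e. with
`∫₀^{T₀}‖f(τ)‖_{Ḃ⁻ˢ}dτ < ∞`:
`∫₀^{T₀}∫₀^t ‖S(T(t−τ)f(τ))‖_{Ḃ⁻ˢ} dτ dt ≤ C∫₀^{T₀}‖f(τ)‖_{Ḃ⁻ˢ}dτ` and, for every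
`t ∈ (0,T₀)`, `∫₀^t ‖T(t−τ)f(τ)‖_{Ḃ⁻ˢ} dτ ≤ C∫₀^{T₀}‖f(τ)‖_{Ḃ⁻ˢ}dτ`. -/
theorem maximal_L1_regularity_Bneg (s : ℝ) (hs0 : 0 < s) (hs2 : s < 2) (M C₀ : ℝ) :
    ∃ C : ℝ≥0, ∀ T₀ : ℝ≥0∞, 0 < T₀ →
      ∀ (D : Set X) (S : X → X) (T : ℝ → X →L[ℝ] X), IsBAS D S T M C₀ →
      ∀ f : ℝ → X,
        AEStronglyMeasurable f
          (volume.restrict {τ : ℝ | 0 < τ ∧ ENNReal.ofReal τ < T₀}) →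
        (∀ᵐ τ ∂volume.restrict {τ : ℝ | 0 < τ ∧ ENNReal.ofReal τ < T₀},
          f τ ∈ S '' D) →
        (∫⁻ τ in {τ : ℝ | 0 < τ ∧ ENNReal.ofReal τ < T₀}, BnegNorm T s (f τ)) ≠ ⊤ →
        (∫⁻ t in {τ : ℝ | 0 < τ ∧ ENNReal.ofReal τ < T₀},
            ∫⁻ τ in Set.Ioo 0 t, BnegNorm T s (S (T (t - τ) (f τ))))
          ≤ C * ∫⁻ τ in {τ : ℝ | 0 < τ ∧ ENNReal.ofReal τ < T₀},
              BnegNorm T s (f τ) ∧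
        ∀ t : ℝ, 0 < t → ENNReal.ofReal t < T₀ →
          (∫⁻ τ in Set.Ioo 0 t, BnegNorm T s (T (t - τ) (f τ)))
            ≤ C * ∫⁻ τ in {τ : ℝ | 0 < τ ∧ ENNReal.ofReal τ < T₀},
                BnegNorm T s (f τ) :=
  maximal_L1_regularity_Bneg_general s hs0 M C₀
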